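/- Let μ be a Borel probability measure on ℝ^d absolutely continuous with respect to Lebesgue measure, let X_1,…,X_n be i.i.d. with law μ, let h_1,…,h_n be n distinct points of [0,1]^d, and let σ̂ be a measurable random permutation of {1,…,n} that is almost surely an optimal assignment of (X_1,…,X_n) to (h_1,…,h_n). Then σ̂ is independent of the order statistic of the sample: for every permutation σ_0 of {1,…,n} and every Borel set A ⊆ (ℝ^d)^n that is invariant under all coordinate permutations, P(σ̂ = σ_0 and (X_1,…,X_n) ∈ A) = P(σ̂ = σ_0) · P((X_1,…,X_n) ∈ A). -/

import Mathlib

/-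
Almost surely the `n!` assignment costs of the sample are pairwise distinct: a tie between two
permutations is a nontrivial linear equation in the sample, hence Lebesgue-null. So `σ̂ = σ₀`
exactly on the cell where `σ₀` is the unique optimum. Permuting the coordinates of the sample by
`τ` maps the cell of `σ` onto the cell of `σ * τ⁻¹` while preserving the i.i.d. law and every
permutation-invariant `A`; hence the `n!` cells meet `A` in equal mass `P(A) / n!`, and `A = univ`
gives `P(σ̂ = σ₀) = 1 / n!`.
-/

open MeasureTheory ProbabilityTheory Filter Topology
open scoped ENNReal NNReal

noncomputable section

/-- `Euc d` is the Euclidean space `ℝ^d` with its Euclidean norm. -/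
abbrev Euc (d : ℕ) : Type := EuclideanSpace ℝ (Fin d)

/-- The unit cube `[0,1]^d`. -/
def unitCube (d : ℕ) : Set (Euc d) := {x | ∀ i, x i ∈ Set.Icc (0 : ℝ) 1}

/-- A permutation `σ` is an optimal assignment of the points `x` to the points `h` if it
minimizes `σ ↦ ∑ i ‖x i − h (σ i)‖²` over all permutations. -/
def IsOptAssign {d n : ℕ} (x h : Fin n → Euc d) (σ : Equiv.Perm (Fin n)) : Prop :=
  ∀ τ : Equiv.Perm (Fin n), ∑ i, ‖x i - h (σ i)‖ ^ 2 ≤ ∑ i, ‖x i - h (τ i)‖ ^ 2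

theorem MeasureTheory.Measure.AbsolutelyContinuous.pi_fin :
    ∀ {n : ℕ} {α : Fin n → Type*} [∀ i, MeasurableSpace (α i)] {μ ν : ∀ i, Measure (α i)}
      [∀ i, SigmaFinite (μ i)] [∀ i, SigmaFinite (ν i)], (∀ i, μ i ≪ ν i) →
      Measure.pi μ ≪ Measure.pi ν
  | 0, _, _, _, _, _, _, _ => by rw [Measure.pi_of_empty, Measure.pi_of_empty]
  | n + 1, α, _, μ, ν, _, _, hμν => by
    rw [← (measurePreserving_piFinSuccAbove μ 0).symm.map_eq,
      ← (measurePreserving_piFinSuccAbove ν 0).symm.map_eq]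
    exact ((hμν 0).prod (pi_fin fun j => hμν _)).map (MeasurableEquiv.measurable _)

theorem measurePreserving_pi_comp_perm {ι α : Type*} [Fintype ι] [MeasurableSpace α]
    (μ : Measure α) [SigmaFinite μ] (τ : Equiv.Perm ι) :
    MeasurePreserving (fun x i => x (τ i)) (Measure.pi fun _ : ι => μ)
      (Measure.pi fun _ : ι => μ) := by
  refine ⟨by fun_prop, (Measure.pi_eq fun s hs => ?_).symm⟩
  have : (fun x : ι → α => fun i => x (τ i)) ⁻¹' Set.univ.pi s
      = Set.univ.pi fun i => s (τ⁻¹ i) := by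
    ext x
    simp only [Set.mem_preimage, Set.mem_univ_pi]
    exact ⟨fun H i => by simpa using H (τ⁻¹ i), fun H i => by simpa using H (τ i)⟩
  rw [Measure.map_apply (by fun_prop) (.univ_pi hs), this, Measure.pi_pi]
  exact Equiv.prod_comp τ⁻¹ fun i => μ (s i)

section Assignment

variable {d n : ℕ}

def assignCost (h x : Fin n → Euc d) (σ : Equiv.Perm (Fin n)) : ℝ := ∑ i, ‖x i - h (σ i)‖ ^ 2

theorem isOptAssign_iff (x h : Fin n → Euc d) (σ : Equiv.Perm (Fin n)) :
    IsOptAssign x h σ ↔ ∀ τ, assignCost h x σ ≤ assignCost h x τ := Iff.rfl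

theorem assignCost_comp (h x : Fin n → Euc d) (σ τ : Equiv.Perm (Fin n)) :
    assignCost h (fun i => x (τ i)) σ = assignCost h x (σ * τ⁻¹) := by
  rw [assignCost, assignCost, ← Equiv.sum_comp τ fun j => ‖x j - h ((σ * τ⁻¹) j)‖ ^ 2]
  simp

theorem isOptAssign_comp_iff (x h : Fin n → Euc d) (σ τ : Equiv.Perm (Fin n)) :
    IsOptAssign (fun i => x (τ i)) h σ ↔ IsOptAssign x h (σ * τ⁻¹) := by
  simp only [isOptAssign_iff, assignCost_comp]
  exact ⟨fun H ρ => by simpa using H (ρ * τ), fun H ρ => H _⟩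

theorem injective_assignCost_comp_iff (h x : Fin n → Euc d) (τ : Equiv.Perm (Fin n)) :
    Function.Injective (assignCost h fun i => x (τ i)) ↔ Function.Injective (assignCost h x) := by
  have : assignCost h (fun i => x (τ i)) = assignCost h x ∘ Equiv.mulRight τ⁻¹ :=
    funext fun σ => assignCost_comp h x σ τ
  rw [this, EquivLike.injective_comp]

theorem exists_isOptAssign (x h : Fin n → Euc d) : ∃ σ, IsOptAssign x h σ := by
  obtain ⟨σ, -, hσ⟩ := Finset.univ.exists_min_image (assignCost h x) Finset.univ_nonempty
  exact ⟨σ, fun τ => hσ τ (Finset.mem_univ τ)⟩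

theorem IsOptAssign.eq_of_injective {x h : Fin n → Euc d} {σ τ : Equiv.Perm (Fin n)}
    (hinj : Function.Injective (assignCost h x)) (hσ : IsOptAssign x h σ)
    (hτ : IsOptAssign x h τ) : σ = τ :=
  hinj ((hσ τ).antisymm (hτ σ))

theorem measurable_assignCost (h : Fin n → Euc d) (σ : Equiv.Perm (Fin n)) :
    Measurable fun x => assignCost h x σ := by
  unfold assignCost; fun_prop

theorem measurableSet_isOptAssign (h : Fin n → Euc d) (σ : Equiv.Perm (Fin n)) :
    MeasurableSet {x | IsOptAssign x h σ} := by
  simp only [isOptAssign_iff, Set.ofPred_forall]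
  exact .iInter fun τ => measurableSet_le (measurable_assignCost h σ) (measurable_assignCost h τ)

theorem measurableSet_injective_assignCost (h : Fin n → Euc d) :
    MeasurableSet {x | Function.Injective (assignCost h x)} := by
  simp only [Function.Injective, Set.ofPred_forall]
  refine .iInter fun σ => .iInter fun τ => ?_
  exact (measurableSet_eq_fun (measurable_assignCost h σ) (measurable_assignCost h τ)).imp
    (.const _)

theorem assignCost_sub_assignCost (h x : Fin n → Euc d) (σ τ : Equiv.Perm (Fin n)) :
    assignCost h x σ - assignCost h x τ = -2 * ∑ i, inner ℝ (x i) (h (σ i) - h (τ i)) := by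
  have (ρ : Equiv.Perm (Fin n)) : assignCost h x ρ
      = ∑ i, ‖x i‖ ^ 2 - 2 * ∑ i, inner ℝ (x i) (h (ρ i)) + ∑ i, ‖h i‖ ^ 2 := by
    simp only [assignCost, norm_sub_sq_real, Finset.sum_add_distrib, Finset.sum_sub_distrib,
      Finset.mul_sum, Equiv.sum_comp ρ fun j => ‖h j‖ ^ 2]
  simp only [this, inner_sub_right, Finset.sum_sub_distrib]
  ring

theorem pi_assignCost_eq_null (μ : Measure (Euc d)) [SigmaFinite μ] (hac : μ ≪ volume)
    {h : Fin n → Euc d} (hinj : Function.Injective h) {σ τ : Equiv.Perm (Fin n)} (hne : σ ≠ τ) :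
    Measure.pi (fun _ => μ) {x | assignCost h x σ = assignCost h x τ} = 0 := by
  let c i := h (σ i) - h (τ i)
  let L : (Fin n → Euc d) →ₗ[ℝ] ℝ := ∑ i, (innerₛₗ ℝ (c i)).comp (LinearMap.proj i)
  have hL (x : Fin n → Euc d) : L x = ∑ i, inner ℝ (x i) (c i) := by
    simp [L, real_inner_comm]
  have hsub : {x | assignCost h x σ = assignCost h x τ} ⊆ LinearMap.ker L := by
    intro x hx
    have := assignCost_sub_assignCost h x σ τ
    rw [Set.mem_ofPred_eq.mp hx, sub_self] at this
    rw [SetLike.mem_coe, LinearMap.mem_ker, hL]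
    linarith
  have hker : LinearMap.ker L ≠ ⊤ := by
    obtain ⟨i, hi⟩ : ∃ i, σ i ≠ τ i := not_forall.1 fun H => hne (Equiv.ext H)
    have hc : c i ≠ 0 := sub_ne_zero.2 (hinj.ne hi)
    refine fun htop => hc (inner_self_eq_zero (𝕜 := ℝ).1 ?_)
    have := LinearMap.mem_ker.1 (htop ▸ Submodule.mem_top : Pi.single i (c i) ∈ LinearMap.ker L)
    rwa [hL, Finset.sum_eq_single i (fun j _ hj => by simp [hj]) (by simp), Pi.single_eq_same]
      at this
  have hpi : Measure.pi (fun _ => μ) ≪ (volume : Measure (Fin n → Euc d)) :=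
    volume_pi (α := fun _ : Fin n => Euc d) ▸ Measure.AbsolutelyContinuous.pi_fin fun _ => hac
  exact measure_mono_null hsub (hpi (Measure.addHaar_submodule volume _ hker))

theorem ae_injective_assignCost (μ : Measure (Euc d)) [SigmaFinite μ] (hac : μ ≪ volume)
    {h : Fin n → Euc d} (hinj : Function.Injective h) :
    ∀ᵐ x ∂Measure.pi (fun _ => μ), Function.Injective (assignCost h x) := by
  simp only [Function.Injective, ae_all_iff]
  intro σ τ
  by_cases hστ : σ = τ
  · exact ae_of_all _ fun _ _ => hστ
  · filter_upwards [measure_eq_zero_iff_ae_notMem.1 (pi_assignCost_eq_null μ hac hinj hστ)]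
      with x hx heq using absurd heq hx

def uniqueOptSet (h : Fin n → Euc d) (σ : Equiv.Perm (Fin n)) : Set (Fin n → Euc d) :=
  {x | IsOptAssign x h σ ∧ Function.Injective (assignCost h x)}

theorem measurableSet_uniqueOptSet (h : Fin n → Euc d) (σ : Equiv.Perm (Fin n)) :
    MeasurableSet (uniqueOptSet h σ) :=
  (measurableSet_isOptAssign h σ).inter (measurableSet_injective_assignCost h)

theorem preimage_uniqueOptSet (h : Fin n → Euc d) (σ τ : Equiv.Perm (Fin n)) :
    (fun x i => x (τ i)) ⁻¹' uniqueOptSet h σ = uniqueOptSet h (σ * τ⁻¹) := by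
  ext x
  simp only [uniqueOptSet, Set.mem_preimage, Set.mem_ofPred_eq, isOptAssign_comp_iff,
    injective_assignCost_comp_iff]

theorem pairwise_disjoint_uniqueOptSet (h : Fin n → Euc d) :
    Pairwise (Function.onFun Disjoint (uniqueOptSet h)) := fun _ _ hne =>
  Set.disjoint_left.2 fun _ hσ hτ => hne (hσ.1.eq_of_injective hσ.2 hτ.1)

theorem iUnion_uniqueOptSet (h : Fin n → Euc d) :
    ⋃ σ, uniqueOptSet h σ = {x | Function.Injective (assignCost h x)} := by
  ext x
  simp only [uniqueOptSet, Set.mem_iUnion, Set.mem_ofPred_eq]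
  exact ⟨fun ⟨_, _, hx⟩ => hx, fun hx => (exists_isOptAssign x h).imp fun _ hσ => ⟨hσ, hx⟩⟩

section Exchangeable

variable {ν : Measure (Fin n → Euc d)} {A : Set (Fin n → Euc d)}

theorem measure_uniqueOptSet_inter_eq
    (hν : ∀ τ : Equiv.Perm (Fin n), MeasurePreserving (fun x i => x (τ i)) ν ν)
    (hA : MeasurableSet A) (hAinv : ∀ τ : Equiv.Perm (Fin n), ∀ x ∈ A, (fun i => x (τ i)) ∈ A)
    (h : Fin n → Euc d) (σ σ' : Equiv.Perm (Fin n)) :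
    ν (uniqueOptSet h σ ∩ A) = ν (uniqueOptSet h σ' ∩ A) := by
  have hpreA (τ : Equiv.Perm (Fin n)) : (fun x i => x (τ i)) ⁻¹' A = A :=
    Set.Subset.antisymm (fun x hx => by simpa using hAinv τ⁻¹ _ hx) (hAinv τ)
  rw [← (hν (σ⁻¹ * σ')).measure_preimage
    ((measurableSet_uniqueOptSet h σ').inter hA).nullMeasurableSet,
    Set.preimage_inter, preimage_uniqueOptSet, hpreA]
  congr 3
  group

theorem card_perm_mul_measure_uniqueOptSet_inter
    (hν : ∀ τ : Equiv.Perm (Fin n), MeasurePreserving (fun x i => x (τ i)) ν ν)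
    {h : Fin n → Euc d} (hinj : ∀ᵐ x ∂ν, Function.Injective (assignCost h x))
    (hA : MeasurableSet A) (hAinv : ∀ τ : Equiv.Perm (Fin n), ∀ x ∈ A, (fun i => x (τ i)) ∈ A)
    (σ : Equiv.Perm (Fin n)) :
    Fintype.card (Equiv.Perm (Fin n)) * ν (uniqueOptSet h σ ∩ A) = ν A := by
  calc Fintype.card (Equiv.Perm (Fin n)) * ν (uniqueOptSet h σ ∩ A)
      = ∑ σ', ν (uniqueOptSet h σ' ∩ A) := by
        simp [measure_uniqueOptSet_inter_eq hν hA hAinv h _ σ]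
    _ = ν ((⋃ σ', uniqueOptSet h σ') ∩ A) := by
        rw [Set.iUnion_inter, measure_iUnion _ fun σ' => (measurableSet_uniqueOptSet h σ').inter hA,
          tsum_fintype]
        exact fun _ _ hne => (pairwise_disjoint_uniqueOptSet h hne).mono
          Set.inter_subset_left Set.inter_subset_left
    _ = ν A := by
        rw [iUnion_uniqueOptSet]
        exact measure_congr (inter_ae_eq_right_of_ae_eq_univ (ae_eq_univ.2 hinj))

theorem measure_uniqueOptSet_inter_eq_mul [IsProbabilityMeasure ν]
    (hν : ∀ τ : Equiv.Perm (Fin n), MeasurePreserving (fun x i => x (τ i)) ν ν)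
    {h : Fin n → Euc d} (hinj : ∀ᵐ x ∂ν, Function.Injective (assignCost h x))
    (hA : MeasurableSet A) (hAinv : ∀ τ : Equiv.Perm (Fin n), ∀ x ∈ A, (fun i => x (τ i)) ∈ A)
    (σ : Equiv.Perm (Fin n)) :
    ν (uniqueOptSet h σ ∩ A) = ν (uniqueOptSet h σ) * ν A := by
  have hA' := card_perm_mul_measure_uniqueOptSet_inter hν hinj hA hAinv σ
  have huniv := card_perm_mul_measure_uniqueOptSet_inter hν hinj .univ (fun _ _ _ => trivial) σ
  rw [Set.inter_univ, measure_univ] at huniv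
  calc ν (uniqueOptSet h σ ∩ A)
      = Fintype.card (Equiv.Perm (Fin n)) * ν (uniqueOptSet h σ) * ν (uniqueOptSet h σ ∩ A) := by
        rw [huniv, one_mul]
    _ = ν (uniqueOptSet h σ) * ν A := by rw [← hA']; ring

end Exchangeable

end Assignment

theorem stmt2_general
    {d n : ℕ} {Ω : Type*} [MeasurableSpace Ω] (P : Measure Ω) [IsProbabilityMeasure P]
    (μ : Measure (Euc d)) [IsProbabilityMeasure μ] (hac : μ ≪ volume)
    (X : Fin n → Ω → Euc d) (hXmeas : ∀ i, Measurable (X i))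
    (hindep : iIndepFun X P)
    (hlaw : ∀ i, Measure.map (X i) P = μ)
    (h : Fin n → Euc d) (hinj : Function.Injective h)
    (σhat : Ω → Equiv.Perm (Fin n))
    (hopt : ∀ᵐ ω ∂P, IsOptAssign (fun i => X i ω) h (σhat ω)) :
    ∀ σ₀ : Equiv.Perm (Fin n), ∀ A : Set (Fin n → Euc d), MeasurableSet A →
      (∀ (τ : Equiv.Perm (Fin n)) (x : Fin n → Euc d), x ∈ A → (fun i => x (τ i)) ∈ A) →
      P ({ω | σhat ω = σ₀} ∩ {ω | (fun i => X i ω) ∈ A})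
        = P {ω | σhat ω = σ₀} * P {ω | (fun i => X i ω) ∈ A} := by
  intro σ₀ A hA hAinv
  have hX : Measurable fun ω i => X i ω := measurable_pi_lambda _ hXmeas
  have hlawX : P.map (fun ω i => X i ω) = Measure.pi fun _ => μ := by
    rw [(iIndepFun_iff_map_fun_eq_pi_map fun i => (hXmeas i).aemeasurable).1 hindep]
    simp_rw [hlaw]
  have hνinj := ae_injective_assignCost μ hac hinj
  have hσ : {ω | σhat ω = σ₀} =ᵐ[P] (fun ω i => X i ω) ⁻¹' uniqueOptSet h σ₀ := by
    rw [← hlawX] at hνinj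
    filter_upwards [hopt, ae_of_ae_map hX.aemeasurable hνinj] with ω hωopt hωinj
    exact propext ⟨fun hω => ⟨hω ▸ hωopt, hωinj⟩, fun hω => hωopt.eq_of_injective hωinj hω.1⟩
  change P (_ ∩ (fun ω i => X i ω) ⁻¹' A) = _ * P ((fun ω i => X i ω) ⁻¹' A)
  rw [measure_congr (hσ.inter (EventuallyEq.refl (ae P) ((fun ω i => X i ω) ⁻¹' A))),
    measure_congr hσ, ← Set.preimage_inter,
    ← Measure.map_apply hX ((measurableSet_uniqueOptSet h σ₀).inter hA),
    ← Measure.map_apply hX (measurableSet_uniqueOptSet h σ₀), ← Measure.map_apply hX hA, hlawX]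
  exact measure_uniqueOptSet_inter_eq_mul (measurePreserving_pi_comp_perm μ) hνinj hA hAinv σ₀

/-- Under the hypotheses of Statement 1, the optimal-assignment permutation `σ̂` is independent
of the order statistic of the sample: for every permutation `σ₀` and every Borel set
`A ⊆ (ℝ^d)^n` invariant under all coordinate permutations, the events `{σ̂ = σ₀}` and
`{(X_1,…,X_n) ∈ A}` are independent. -/
theorem stmt2
    {d n : ℕ} {Ω : Type*} [MeasurableSpace Ω] (P : Measure Ω) [IsProbabilityMeasure P]
    (μ : Measure (Euc d)) [IsProbabilityMeasure μ] (hac : μ ≪ volume)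
    (X : Fin n → Ω → Euc d) (hXmeas : ∀ i, Measurable (X i))
    (hindep : iIndepFun X P)
    (hlaw : ∀ i, Measure.map (X i) P = μ)
    (h : Fin n → Euc d) (hcube : ∀ i, h i ∈ unitCube d) (hinj : Function.Injective h)
    (σhat : Ω → Equiv.Perm (Fin n))
    (hσmeas : ∀ σ₀ : Equiv.Perm (Fin n), MeasurableSet {ω | σhat ω = σ₀})
    (hopt : ∀ᵐ ω ∂P, IsOptAssign (fun i => X i ω) h (σhat ω)) :
    ∀ σ₀ : Equiv.Perm (Fin n), ∀ A : Set (Fin n → Euc d), MeasurableSet A →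
      (∀ (τ : Equiv.Perm (Fin n)) (x : Fin n → Euc d), x ∈ A → (fun i => x (τ i)) ∈ A) →
      P ({ω | σhat ω = σ₀} ∩ {ω | (fun i => X i ω) ∈ A})
        = P {ω | σhat ω = σ₀} * P {ω | (fun i => X i ω) ∈ A} :=
  stmt2_general P μ hac X hXmeas hindep hlaw h hinj σhat hopt

end
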